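/- arXiv:1612.02229 — 5 statements merged into one kernel-verified Lean document; each statement's English description precedes it below -/
import Mathlib

section
/- Fix a real number β > -1. Let (M(n))_{n≥2} be a process adapted to a filtration (𝓕_n) on a probability space, taking values in the integers ≥ 2, such that for every n ≥ 2, almost surely M(n+1) − M(n) ∈ {0,1} and P( M(n+1) = M(n)+1 | 𝓕_n ) ≥ M(n)/(2(2+β)n). Then, with γ = 1/(4(2+β)), almost surely inf_{n≥2} M(n)/n^γ > 0. -/
/-!
For `γ = 1 / (4 (2 + β))` the process `Z n = n ^ γ / M n` is a nonnegative supermartingale.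
Indeed `1 / (x + 1) = 1 / x - 1 / (x (x + 1))`, so the drift assumption gives
`E[1 / M (n + 1) | 𝓕 n] ≤ (1 - γ / n) / M n` as soon as `M n ≥ 1`, and Bernoulli's inequality
gives `(n + 1) ^ γ (1 - γ / n) ≤ n ^ γ`. A nonnegative supermartingale is bounded in `L¹`, hence
converges almost surely, so almost surely `Z n ≤ B` for all `n`, i.e. `M n / n ^ γ ≥ 1 / B`.
-/

open MeasureTheory

theorem rpow_add_one_mul_one_sub_div_le {γ t : ℝ} (hγ₀ : 0 ≤ γ) (hγ₁ : γ ≤ 1) (ht : 0 < t) :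
    (t + 1) ^ γ * (1 - γ / t) ≤ t ^ γ := by
  rcases le_or_gt 0 (1 - γ / t) with hpos | hneg
  · have hbernoulli : (t + 1) ^ γ ≤ t ^ γ * (1 + γ / t) :=
      calc (t + 1) ^ γ = (t * (1 + 1 / t)) ^ γ := by congr 1; field_simp
        _ = t ^ γ * (1 + 1 / t) ^ γ := Real.mul_rpow ht.le (by positivity)
        _ ≤ t ^ γ * (1 + γ * (1 / t)) := by
          gcongr; exact rpow_one_add_le_one_add_mul_self (by linarith [one_div_pos.2 ht]) hγ₀ hγ₁
        _ = t ^ γ * (1 + γ / t) := by ring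
    calc (t + 1) ^ γ * (1 - γ / t) ≤ t ^ γ * (1 + γ / t) * (1 - γ / t) := by gcongr
      _ = t ^ γ - t ^ γ * (γ / t) ^ 2 := by ring
      _ ≤ t ^ γ := sub_le_self _ (by positivity)
  · exact (mul_nonpos_of_nonneg_of_nonpos (by positivity) hneg.le).trans (by positivity)

theorem inv_sub_inv_mul_inv_add_one_mul_le {x q γ t : ℝ} (hx : 1 ≤ x) (hγ : 0 ≤ γ) (ht : 0 < t)
    (hq : 2 * γ * x / t ≤ q) : x⁻¹ - x⁻¹ * (x + 1)⁻¹ * q ≤ (1 - γ / t) * x⁻¹ := by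
  have hx₀ : 0 < x := by linarith
  have : γ / t * x⁻¹ ≤ x⁻¹ * (x + 1)⁻¹ * q := by
    rw [show x⁻¹ * (x + 1)⁻¹ * q = q / (x * (x + 1)) by rw [div_eq_mul_inv, mul_inv]; ring,
      le_div_iff₀ (by positivity)]
    calc γ / t * x⁻¹ * (x * (x + 1)) = γ * (x + 1) / t := by field_simp
      _ ≤ 2 * γ * x / t := div_le_div_of_nonneg_right (by nlinarith) ht.le
      _ ≤ q := hq
  linarith [show (1 - γ / t) * x⁻¹ = x⁻¹ - γ / t * x⁻¹ by ring]

namespace MeasureTheory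

variable {Ω : Type*} {m m0 : MeasurableSpace Ω} {μ : Measure Ω}

theorem integrable_inv_natCast [IsFiniteMeasure μ] {X : Ω → ℕ} (hX : Measurable X) :
    Integrable (fun ω => (X ω : ℝ)⁻¹) μ :=
  .of_bound (by fun_prop) 1 <| ae_of_all _ fun ω => by
    simpa using Nat.cast_inv_le_one (α := ℝ) (X ω)

theorem condExp_inv_natCast_eq_of_step [IsFiniteMeasure μ] (hm : m ≤ m0) {X Y : Ω → ℕ}
    (hX : Measurable[m] X) (hY : Measurable Y)
    (hstep : ∀ᵐ ω ∂μ, 0 < X ω ∧ (Y ω = X ω ∨ Y ω = X ω + 1)) :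
    μ[fun ω => (Y ω : ℝ)⁻¹ | m] =ᵐ[μ] fun ω => (X ω : ℝ)⁻¹ - (X ω : ℝ)⁻¹ * (X ω + 1 : ℝ)⁻¹ *
      μ[{ω | Y ω = X ω + 1}.indicator (fun _ => (1 : ℝ)) | m] ω := by
  set I : Ω → ℝ := {ω | Y ω = X ω + 1}.indicator (fun _ => (1 : ℝ))
  set h : Ω → ℝ := fun ω => (X ω : ℝ)⁻¹ * (X ω + 1 : ℝ)⁻¹
  have hXm : Measurable X := hX.mono hm le_rfl
  have hhm : StronglyMeasurable[m] h := by fun_prop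
  have hI : Integrable I μ :=
    (integrable_const 1).indicator (measurableSet_eq_fun hY (hXm.add_const 1))
  have hhI : Integrable (h * I) μ := by
    refine hI.bdd_mul (c := 1) (hhm.mono hm).aestronglyMeasurable (ae_of_all _ fun ω => ?_)
    rw [Real.norm_eq_abs, abs_of_nonneg (by positivity)]
    exact mul_le_one₀ (Nat.cast_inv_le_one _) (by positivity)
      (inv_le_one_of_one_le₀ (by linarith [(X ω).cast_nonneg (α := ℝ)]))
  have hsplit : (fun ω => (Y ω : ℝ)⁻¹) =ᵐ[μ] (fun ω => (X ω : ℝ)⁻¹) - h * I := by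
    filter_upwards [hstep] with ω hω
    obtain ⟨hX₀, hY | hY⟩ := hω
    · simp [I, h, hY]
    · have : (X ω : ℝ) ≠ 0 := by positivity
      simp only [hY, Nat.cast_add, Nat.cast_one, Pi.sub_apply, Pi.mul_apply, Set.mem_ofPred_eq,
        Set.indicator_of_mem, mul_one, h, I]
      field_simp
      ring
  filter_upwards [condExp_congr_ae (m := m) hsplit,
    condExp_sub (m := m) (integrable_inv_natCast hXm) hhI,
    condExp_mul_of_stronglyMeasurable_left hhm hhI hI] with ω h₁ h₂ h₃
  have hXinv : StronglyMeasurable[m] fun ω => (X ω : ℝ)⁻¹ := by fun_prop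
  rw [h₁, h₂, Pi.sub_apply, h₃,
    condExp_of_stronglyMeasurable hm hXinv (integrable_inv_natCast hXm)]
  rfl

theorem condExp_rpow_div_succ_le [IsFiniteMeasure μ] (hm : m ≤ m0) {X Y : Ω → ℕ}
    (hX : Measurable[m] X) (hY : Measurable Y)
    (hstep : ∀ᵐ ω ∂μ, 0 < X ω ∧ (Y ω = X ω ∨ Y ω = X ω + 1)) {γ t : ℝ} (hγ₀ : 0 ≤ γ)
    (hγ₁ : γ ≤ 1) (ht : 0 < t)
    (hrate : ∀ᵐ ω ∂μ,
      2 * γ * X ω / t ≤ μ[{ω | Y ω = X ω + 1}.indicator (fun _ => (1 : ℝ)) | m] ω) :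
    μ[fun ω => (t + 1) ^ γ / Y ω | m] ≤ᵐ[μ] fun ω => t ^ γ / X ω := by
  have hsmul : (fun ω => (t + 1) ^ γ / Y ω) = (t + 1) ^ γ • fun ω => (Y ω : ℝ)⁻¹ := by
    ext ω; simp [div_eq_mul_inv]
  filter_upwards [hsmul ▸ condExp_smul (m := m) (μ := μ) ((t + 1) ^ γ) (fun ω => (Y ω : ℝ)⁻¹),
    condExp_inv_natCast_eq_of_step hm hX hY hstep, hstep, hrate] with ω hcond hinv hω hq
  have hX₁ : (1 : ℝ) ≤ X ω := by exact_mod_cast hω.1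
  rw [hcond, Pi.smul_apply, hinv, smul_eq_mul, div_eq_mul_inv]
  calc (t + 1) ^ γ * ((X ω : ℝ)⁻¹ - (X ω : ℝ)⁻¹ * (X ω + 1 : ℝ)⁻¹ * _)
      ≤ (t + 1) ^ γ * ((1 - γ / t) * (X ω : ℝ)⁻¹) := by
        gcongr; exact inv_sub_inv_mul_inv_add_one_mul_le hX₁ hγ₀ ht hq
    _ = (t + 1) ^ γ * (1 - γ / t) * (X ω : ℝ)⁻¹ := by ring
    _ ≤ t ^ γ * (X ω : ℝ)⁻¹ := by
        gcongr; exact rpow_add_one_mul_one_sub_div_le hγ₀ hγ₁ ht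

theorem Supermartingale.ae_bddAbove_of_nonneg [IsFiniteMeasure μ] {ℱ : Filtration ℕ m0}
    {f : ℕ → Ω → ℝ} (hf : Supermartingale f ℱ μ) (hnonneg : ∀ n, 0 ≤ᵐ[μ] f n) :
    ∀ᵐ ω ∂μ, BddAbove (Set.range fun n => f n ω) := by
  have hL1 : ∀ n, eLpNorm ((-f) n) 1 μ ≤ (∫ ω, f 0 ω ∂μ).toNNReal := fun n => by
    rw [Pi.neg_apply, eLpNorm_neg, eLpNorm_one_eq_lintegral_enorm,
      ← ofReal_integral_norm_eq_lintegral_enorm (hf.integrable n),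
      integral_congr_ae ((hnonneg n).mono fun ω hω => Real.norm_of_nonneg hω)]
    exact ENNReal.ofReal_le_ofReal <| by simpa using hf.setIntegral_le (Nat.zero_le n) .univ
  filter_upwards [hf.neg.exists_ae_tendsto_of_bdd hL1] with ω ⟨c, hc⟩
  simpa using hc.neg.bddAbove_range

def Filtration.shift (ℱ : Filtration ℕ m0) (k : ℕ) : Filtration ℕ m0 :=
  ⟨fun n => ℱ (n + k), fun _ _ hij => ℱ.mono (by omega), fun n => ℱ.le (n + k)⟩

theorem supermartingale_rpow_div_of_step [IsFiniteMeasure μ] {ℱ : Filtration ℕ m0}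
    {M : ℕ → Ω → ℕ} (hM : ∀ n, Measurable[ℱ n] (M n)) {γ t₀ : ℝ} (hγ₀ : 0 ≤ γ) (hγ₁ : γ ≤ 1)
    (ht₀ : 0 < t₀)
    (hstep : ∀ n, ∀ᵐ ω ∂μ, 0 < M n ω ∧ (M (n + 1) ω = M n ω ∨ M (n + 1) ω = M n ω + 1))
    (hrate : ∀ n : ℕ, ∀ᵐ ω ∂μ, 2 * γ * M n ω / (n + t₀) ≤
      μ[{ω | M (n + 1) ω = M n ω + 1}.indicator (fun _ => (1 : ℝ)) | ℱ n] ω) :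
    Supermartingale (fun (n : ℕ) ω => ((n : ℝ) + t₀) ^ γ / M n ω) ℱ μ := by
  refine supermartingale_nat (fun n => ?_) (fun n => ?_) (fun n => ?_)
  · have := hM n
    exact (by fun_prop : Measurable[ℱ n] fun ω => ((n : ℝ) + t₀) ^ γ / M n ω).stronglyMeasurable
  · simp_rw [div_eq_mul_inv]
    exact (integrable_inv_natCast ((hM n).mono (ℱ.le n) le_rfl)).const_mul _
  · have hsucc : ((n + 1 : ℕ) : ℝ) + t₀ = (n + t₀) + 1 := by push_cast; ring
    simp only [hsucc]
    exact condExp_rpow_div_succ_le (ℱ.le n) (hM n) ((hM (n + 1)).mono (ℱ.le _) le_rfl)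
      (hstep n) hγ₀ hγ₁ (by positivity) (hrate n)

end MeasureTheory

/-- Initial estimate (Lemma 2.2, abstract form): if `M` is adapted, takes
values `≥ 2`, increases by at most one per step, and the conditional
probability of an increase is at least `M n / (2(2+β)n)`, then with
`γ = 1/(4(2+β))` almost surely `inf_{n ≥ 2} M n / n^γ > 0`. -/
theorem stmt7 {Ω : Type*} {m0 : MeasurableSpace Ω} {μ : Measure Ω}
    [IsProbabilityMeasure μ] (𝓕 : Filtration ℕ m0)
    (β : ℝ) (hβ : -1 < β) (M : ℕ → Ω → ℕ)
    (hM : ∀ n, Measurable[𝓕 n] (M n))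
    (hval : ∀ n : ℕ, 2 ≤ n → ∀ᵐ ω ∂μ,
      2 ≤ M n ω ∧ (M (n + 1) ω = M n ω ∨ M (n + 1) ω = M n ω + 1))
    (hdyn : ∀ n : ℕ, 2 ≤ n →
      (fun ω => (M n ω : ℝ) / (2 * (2 + β) * n)) ≤ᵐ[μ]
        μ[Set.indicator {ω | M (n + 1) ω = M n ω + 1} (fun _ => (1 : ℝ)) | 𝓕 n]) :
    ∀ᵐ ω ∂μ,
      0 < ⨅ n : ℕ, (M (n + 2) ω : ℝ) / ((n : ℝ) + 2) ^ ((1 : ℝ) / (4 * (2 + β))) := by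
  set γ : ℝ := 1 / (4 * (2 + β)) with hγ
  have hβ₂ : 0 < 2 + β := by linarith
  have hγ₁ : γ ≤ 1 := by rw [hγ, div_le_one (by positivity)]; linarith
  have hrate (n : ℕ) (ω : Ω) : 2 * γ * M (n + 2) ω / ((n : ℝ) + 2) =
      M (n + 2) ω / (2 * (2 + β) * ((n + 2 : ℕ) : ℝ)) := by
    rw [hγ]; push_cast; field_simp; ring
  have hZ : Supermartingale (fun (n : ℕ) ω => ((n : ℝ) + 2) ^ γ / M (n + 2) ω) (𝓕.shift 2) μ :=
    supermartingale_rpow_div_of_step (M := fun n => M (n + 2)) (fun n => hM _) (by positivity)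
      hγ₁ two_pos (fun n => (hval (n + 2) (by omega)).mono fun ω hω => ⟨by omega, hω.2⟩)
      fun n => (hdyn (n + 2) (by omega)).mono fun ω hω => (hrate n ω).trans_le hω
  filter_upwards [hZ.ae_bddAbove_of_nonneg fun n => ae_of_all _ fun ω => by positivity,
    ae_all_iff.2 fun n => hval (n + 2) (by omega)] with ω ⟨B, hB⟩ hω
  have hZpos : ∀ n : ℕ, 0 < ((n : ℝ) + 2) ^ γ / M (n + 2) ω := fun n =>
    div_pos (by positivity) (by have := (hω n).1; positivity)
  refine (inv_pos.2 ((hZpos 0).trans_le (hB ⟨0, rfl⟩))).trans_le (le_ciInf fun n => ?_)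
  rw [← inv_div]
  exact inv_anti₀ (hZpos n) (hB ⟨n, rfl⟩)
end

section
/- Fix a real number β > -1 and an integer n ≥ 2. Let 𝒢 be a sub-σ-algebra of a probability space, let X be a 𝒢-measurable random variable taking values in the positive integers, and let Y be an integrable random variable with Y − X ∈ {0,1} almost surely and P( Y = X+1 | 𝒢 ) ≥ X/(2(2+β)n) almost surely. Then E( 1/Y | 𝒢 ) ≤ (1/X)·(1 − 1/(4(2+β)n)) almost surely. -/
/-!
Since `Y ∈ {X, X + 1}`, we have `1/Y = 1/X - 𝟙{Y = X+1} / (X(X+1))` almost surely. Taking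
conditional expectations and pulling out the `𝒢`-measurable factors gives
`E(1/Y | 𝒢) = 1/X - P(Y = X+1 | 𝒢) / (X(X+1)) ≤ 1/X - 1/((X+1) D)` with `D = 2(2+β)n`,
and `X + 1 ≤ 2X` turns this into the claimed bound.
-/

open MeasureTheory Filter

section

variable {Ω : Type*} {m m0 : MeasurableSpace Ω} {μ : Measure Ω}

theorem condExp_sub_mul_of_bounded (hm : m ≤ m0) [IsFiniteMeasure μ] {f c g : Ω → ℝ}
    (hf : StronglyMeasurable[m] f) {C : ℝ} (hfC : ∀ ω, ‖f ω‖ ≤ C)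
    (hc : StronglyMeasurable[m] c) {D : ℝ} (hcD : ∀ ω, ‖c ω‖ ≤ D) (hg : Integrable g μ) :
    μ[f - c * g | m] =ᵐ[μ] f - c * μ[g | m] := by
  have hfi : Integrable f μ := .of_bound (hf.mono hm).aestronglyMeasurable C (ae_of_all _ hfC)
  have hcg : Integrable (c * g) μ :=
    hg.bdd_mul (hc.mono hm).aestronglyMeasurable (ae_of_all _ hcD)
  filter_upwards [condExp_sub hfi hcg m, condExp_mul_of_stronglyMeasurable_left hc hcg hg]
    with ω hsub hmul
  rw [hsub, Pi.sub_apply, condExp_of_stronglyMeasurable hm hf hfi, hmul]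
  rfl

theorem nullMeasurableSet_eq_succ {X Y : Ω → ℕ} (hX : Measurable X)
    (hY : AEStronglyMeasurable (fun ω => (Y ω : ℝ)) μ) :
    NullMeasurableSet {ω | Y ω = X ω + 1} μ := by
  have hX1 : Measurable fun ω => (X ω : ℝ) + 1 := (measurable_from_nat.comp hX).add_const 1
  have hcast := hY.nullMeasurableSet_eq_fun hX1.aestronglyMeasurable
  simpa only [← Nat.cast_succ, Nat.cast_inj] using hcast

end

theorem one_div_natCast_eq_of_eq_or_eq_succ {x y : ℕ} (hx : x ≠ 0) (h : y = x ∨ y = x + 1) :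
    (1 / y : ℝ) = 1 / x - 1 / (x * (x + 1)) * if y = x + 1 then 1 else 0 := by
  rcases h with rfl | rfl
  · simp
  · have hx' : (x : ℝ) ≠ 0 := Nat.cast_ne_zero.mpr hx
    rw [if_pos rfl]
    push_cast
    field_simp
    ring

theorem one_div_sub_le_of_div_le {x D E : ℝ} (hx : 1 ≤ x) (hD : 0 < D) (hE : x / D ≤ E) :
    1 / x - 1 / (x * (x + 1)) * E ≤ 1 / x * (1 - 1 / (2 * D)) := by
  have hx0 : 0 < x := by linarith
  calc 1 / x - 1 / (x * (x + 1)) * E ≤ 1 / x - 1 / (x * (x + 1)) * (x / D) := by gcongr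
    _ = 1 / x - 1 / ((x + 1) * D) := by field_simp
    _ ≤ 1 / x - 1 / (2 * x * D) := by gcongr; linarith
    _ = 1 / x * (1 - 1 / (2 * D)) := by field_simp

theorem norm_one_div_le_one_of_one_le {x : ℝ} (hx : 1 ≤ x) : ‖1 / x‖ ≤ 1 := by
  rw [Real.norm_of_nonneg (by positivity)]
  exact (div_le_one (by linarith)).mpr hx

/-- One-step conditional expectation estimate from the proof of
Lemma 2.2: if `Y - X ∈ {0,1}` a.s. and
`P(Y = X+1 | 𝒢) ≥ X/(2(2+β)n)` a.s., then
`E(1/Y | 𝒢) ≤ (1/X)(1 - 1/(4(2+β)n))` a.s. -/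
theorem stmt8 {Ω : Type*} {m0 : MeasurableSpace Ω} (μ : Measure Ω)
    [IsProbabilityMeasure μ]
    (𝒢 : MeasurableSpace Ω) (h𝒢 : 𝒢 ≤ m0)
    (β : ℝ) (hβ : -1 < β) (n : ℕ) (hn : 2 ≤ n)
    (X Y : Ω → ℕ)
    (hX : Measurable[𝒢] X) (hXpos : ∀ ω, 1 ≤ X ω)
    (hYint : Integrable (fun ω => (Y ω : ℝ)) μ)
    (hstep : ∀ᵐ ω ∂μ, Y ω = X ω ∨ Y ω = X ω + 1)
    (hprob : (fun ω => (X ω : ℝ) / (2 * (2 + β) * n)) ≤ᵐ[μ]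
      μ[Set.indicator {ω | Y ω = X ω + 1} (fun _ => (1 : ℝ)) | 𝒢]) :
    μ[fun ω => 1 / (Y ω : ℝ) | 𝒢] ≤ᵐ[μ]
      fun ω => (1 / (X ω : ℝ)) * (1 - 1 / (4 * (2 + β) * n)) := by
  set I := Set.indicator {ω | Y ω = X ω + 1} (fun _ => (1 : ℝ))
  set f : Ω → ℝ := fun ω => 1 / (X ω : ℝ)
  set c : Ω → ℝ := fun ω => 1 / ((X ω : ℝ) * (X ω + 1))
  have hXℝ : Measurable[𝒢] fun ω => (X ω : ℝ) := measurable_from_nat.comp hX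
  have hXℝpos (ω : Ω) : (1 : ℝ) ≤ X ω := by exact_mod_cast hXpos ω
  have hdecomp : (fun ω => 1 / (Y ω : ℝ)) =ᵐ[μ] f - c * I := by
    filter_upwards [hstep] with ω hω
    simpa [f, c, I, Set.indicator_apply] using
      one_div_natCast_eq_of_eq_or_eq_succ (by have := hXpos ω; omega) hω
  have hf : StronglyMeasurable[𝒢] f := (measurable_const.div hXℝ).stronglyMeasurable
  have hc : StronglyMeasurable[𝒢] c :=
    (measurable_const.div (hXℝ.mul (hXℝ.add_const 1))).stronglyMeasurable
  have hI : Integrable I μ :=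
    (integrable_const 1).indicator₀ (nullMeasurableSet_eq_succ (hX.mono h𝒢 le_rfl) hYint.1)
  have hpull : μ[f - c * I | 𝒢] =ᵐ[μ] f - c * μ[I | 𝒢] :=
    condExp_sub_mul_of_bounded h𝒢 hf (fun ω => norm_one_div_le_one_of_one_le (hXℝpos ω))
      hc (fun ω => norm_one_div_le_one_of_one_le (by nlinarith [hXℝpos ω])) hI
  have hD : (0 : ℝ) < 2 * (2 + β) * n := by
    have : (2 : ℝ) ≤ n := by exact_mod_cast hn
    nlinarith
  filter_upwards [condExp_congr_ae hdecomp, hpull, hprob] with ω hcongr hpullω hprobω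
  rw [hcongr, hpullω, show 4 * (2 + β) * (n : ℝ) = 2 * (2 * (2 + β) * n) by ring]
  exact one_div_sub_le_of_div_le (hXℝpos ω) hD hprobω
end

section
/- Let α > 0 and x be real numbers, and let k be a positive integer with k + x > 0. Suppose (r_n)_{n≥k} is a sequence of positive real numbers satisfying r_{n+1} = r_n·(1 + α/(n+x)) for all n ≥ k. Then the limit lim_{n→∞} r_n/n^α exists and is a strictly positive real number. -/
/-!
Unrolling the recursion gives `r (k + m) = r k * ∏_{j < m} (a + α + j) / (a + j)` with
`a = k + x`. Euler's limit formula `Γ(s) = lim n ^ s * n! / (s (s + 1) ⋯ (s + n))`, taken at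
`s = a` and `s = a + α`, shows that this product grows like `Γ(a) / Γ(a + α) * m ^ α`, so
`r n / n ^ α` tends to `r k * Γ(k + x) / Γ(k + x + α)`.
-/

open Filter Topology Finset

theorem eq_mul_prod_range_of_succ_eq_mul {M : Type*} [CommMonoid M] {u c : ℕ → M} {k : ℕ}
    (h : ∀ n, k ≤ n → u (n + 1) = u n * c n) (m : ℕ) :
    u (k + m) = u k * ∏ j ∈ range m, c (k + j) := by
  induction m with
  | zero => simp
  | succ m ih => rw [← add_assoc, h _ (Nat.le_add_right k m), ih, prod_range_succ, mul_assoc]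

namespace Real

theorem GammaSeq_div_GammaSeq {a b : ℝ} (ha : 0 < a) (hb : 0 < b) {m : ℕ} (hm : m ≠ 0) :
    GammaSeq a m / GammaSeq b m =
      (∏ j ∈ range (m + 1), (b + j) / (a + j)) / (m : ℝ) ^ (b - a) := by
  have hm' : (0 : ℝ) < m := by positivity
  have hpa : ∏ j ∈ range (m + 1), (a + j) ≠ 0 := prod_ne_zero_iff.2 fun j _ => by positivity
  have hpb : ∏ j ∈ range (m + 1), (b + j) ≠ 0 := prod_ne_zero_iff.2 fun j _ => by positivity
  have hfact : (m.factorial : ℝ) ≠ 0 := by positivity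
  have hma : (m : ℝ) ^ a ≠ 0 := by positivity
  have hmb : (m : ℝ) ^ b ≠ 0 := by positivity
  rw [GammaSeq, GammaSeq, prod_div_distrib, rpow_sub hm']
  field_simp

theorem tendsto_prod_range_div_rpow {a b : ℝ} (ha : 0 < a) (hb : 0 < b) :
    Tendsto (fun m : ℕ => (∏ j ∈ range (m + 1), (b + j) / (a + j)) / (m : ℝ) ^ (b - a))
      atTop (𝓝 (Gamma a / Gamma b)) :=
  ((GammaSeq_tendsto_Gamma a).div (GammaSeq_tendsto_Gamma b) (Gamma_pos_of_pos hb).ne').congr'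
    ((eventually_ne_atTop 0).mono fun _ hm => GammaSeq_div_GammaSeq ha hb hm)

end Real

theorem stmt9_general (α x : ℝ) (hα : 0 < α) (k : ℕ)
    (hkx : 0 < (k : ℝ) + x)
    (r : ℕ → ℝ) (hrpos : ∀ n, k ≤ n → 0 < r n)
    (hrec : ∀ n, k ≤ n → r (n + 1) = r n * (1 + α / ((n : ℝ) + x))) :
    ∃ l : ℝ, 0 < l ∧
      Tendsto (fun n : ℕ => r n / (n : ℝ) ^ α) atTop (𝓝 l) := by
  have hkxα : 0 < (k : ℝ) + x + α := by positivity
  have hprod (m : ℕ) : r (k + m) = r k * ∏ j ∈ range m, (k + x + α + j) / (k + x + j) := by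
    refine (eq_mul_prod_range_of_succ_eq_mul hrec m).trans
      (congrArg _ (prod_congr rfl fun j _ => ?_))
    have : (k : ℝ) + j + x ≠ 0 := by linarith [(Nat.cast_nonneg j : (0 : ℝ) ≤ j)]
    rw [Nat.cast_add]
    field_simp
    ring
  have hratio : Tendsto (fun m : ℕ => ((m : ℝ) / (m + (k + 1 : ℕ))) ^ α) atTop (𝓝 1) := by
    simpa using (tendsto_natCast_div_add_atTop ((k + 1 : ℕ) : ℝ)).rpow_const (Or.inr hα.le)
  have hlim := ((Real.tendsto_prod_range_div_rpow hkx hkxα).const_mul (r k)).mul hratio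
  refine ⟨r k * (Real.Gamma (k + x) / Real.Gamma (k + x + α)) * 1, ?_, ?_⟩
  · have := hrpos k le_rfl
    have := Real.Gamma_pos_of_pos hkx
    have := Real.Gamma_pos_of_pos hkxα
    positivity
  rw [← tendsto_add_atTop_iff_nat (k + 1)]
  refine hlim.congr' ((eventually_ne_atTop 0).mono fun m hm => ?_)
  have hm_pos : (0 : ℝ) < m := by positivity
  have hcast : ((m + (k + 1) : ℕ) : ℝ) = m + (k + 1 : ℕ) := Nat.cast_add m (k + 1)
  simp only [add_sub_cancel_left, Real.div_rpow hm_pos.le (by positivity : (0 : ℝ) ≤ m + (k + 1 : ℕ)),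
    hcast]
  rw [show m + (k + 1) = k + (m + 1) by omega, hprod]
  field_simp

/-- Lemma 2.1 (Galashin): if a positive sequence satisfies
`r (n+1) = r n * (1 + α/(n+x))` for `n ≥ k`, then `r n / n ^ α` has a
strictly positive limit. -/
theorem stmt9 (α x : ℝ) (hα : 0 < α) (k : ℕ) (hk : 0 < k)
    (hkx : 0 < (k : ℝ) + x)
    (r : ℕ → ℝ) (hrpos : ∀ n, k ≤ n → 0 < r n)
    (hrec : ∀ n, k ≤ n → r (n + 1) = r n * (1 + α / ((n : ℝ) + x))) :
    ∃ l : ℝ, 0 < l ∧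
      Tendsto (fun n : ℕ => r n / (n : ℝ) ^ α) atTop (𝓝 l) :=
  stmt9_general α x hα k hkx r hrpos hrec
end

section
/- Let h : ℝ → ℝ be convex and differentiable on an interval I. Let real numbers F, G, a, b satisfy G ≤ F, a > 0, b > 0, with G − b, G, F, F + a all in I, and suppose h(G) − h(G−b) > 0. Then (h(F+a) − h(F)) / (h(G) − h(G−b)) ≥ a/b. Consequently, if real numbers p and q satisfy p ≥ h(F+a) − h(F) and 0 < q ≤ h(G) − h(G−b), then q/(p+q) ≤ b/(a+b). -/
/-! The secant slope of a convex function increases when the chord moves to the right, so the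
slope of `h` on `[G - b, G]` is at most its slope on `[F, F + a]`; both inequalities are
rearrangements of this comparison of slopes. -/

theorem ConvexOn.slope_le_slope_of_le {𝕜 : Type*} [Field 𝕜] [LinearOrder 𝕜]
    [IsStrictOrderedRing 𝕜] {s : Set 𝕜} {f : 𝕜 → 𝕜} (hf : ConvexOn 𝕜 s f) {x y z w : 𝕜}
    (hx : x ∈ s) (hw : w ∈ s) (hxy : x < y) (hyz : y ≤ z) (hzw : z < w) :
    (f y - f x) / (y - x) ≤ (f w - f z) / (w - z) :=
  (hf.secant_mono_aux2 hx hw hxy (hyz.trans_lt hzw)).trans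
    (hf.secant_mono_aux3 hx hw (hxy.trans_le hyz) hzw)

theorem div_add_le_div_add_of_div_le_div {a b p q : ℝ} (ha : 0 < a) (hb : 0 < b) (hq : 0 < q)
    (h : q / b ≤ p / a) : q / (p + q) ≤ b / (a + b) := by
  rw [div_le_div_iff₀ hb ha] at h
  have hp : 0 < p := pos_of_mul_pos_left ((mul_pos hq ha).trans_le h) hb.le
  rw [div_le_div_iff₀ (by linarith) (by linarith)]
  linarith

theorem stmt10_general (I : Set ℝ) (h : ℝ → ℝ)
    (hconv : ConvexOn ℝ I h)
    (F G a b : ℝ) (hGF : G ≤ F) (ha : 0 < a) (hb : 0 < b)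
    (hGb : G - b ∈ I) (hFa : F + a ∈ I)
    (hpos : 0 < h G - h (G - b)) :
    a / b ≤ (h (F + a) - h F) / (h G - h (G - b)) ∧
      ∀ p q : ℝ, h (F + a) - h F ≤ p → 0 < q → q ≤ h G - h (G - b) →
        q / (p + q) ≤ b / (a + b) := by
  have slope_le : (h G - h (G - b)) / b ≤ (h (F + a) - h F) / a := by
    simpa only [sub_sub_cancel, add_sub_cancel_left] using
      hconv.slope_le_slope_of_le hGb hFa (sub_lt_self G hb) hGF (lt_add_of_pos_right F ha)
  refine ⟨?_, fun p q hp hq hqE => div_add_le_div_add_of_div_le_div ha hb hq ?_⟩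
  · rw [div_le_div_iff₀ hb hpos]
    rw [div_le_div_iff₀ hb ha] at slope_le
    linarith
  · calc q / b ≤ (h G - h (G - b)) / b := by gcongr
      _ ≤ (h (F + a) - h F) / a := slope_le
      _ ≤ p / a := by gcongr

/-- The deterministic convexity inequality underlying the coupling lemma
(Lemma 3.2): for a convex differentiable `h` on an interval `I`,
with `G ≤ F`, `a, b > 0` and the relevant points in `I`,
`(h (F+a) - h F) / (h G - h (G-b)) ≥ a / b`; consequently, if
`p ≥ h (F+a) - h F` and `0 < q ≤ h G - h (G-b)`, then
`q / (p+q) ≤ b / (a+b)`. -/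
theorem stmt10 (I : Set ℝ) (h : ℝ → ℝ)
    (hconv : ConvexOn ℝ I h) (hdiff : DifferentiableOn ℝ h I)
    (F G a b : ℝ) (hGF : G ≤ F) (ha : 0 < a) (hb : 0 < b)
    (hGb : G - b ∈ I) (hG : G ∈ I) (hF : F ∈ I) (hFa : F + a ∈ I)
    (hpos : 0 < h G - h (G - b)) :
    a / b ≤ (h (F + a) - h F) / (h G - h (G - b)) ∧
      ∀ p q : ℝ, h (F + a) - h F ≤ p → 0 < q → q ≤ h G - h (G - b) →
        q / (p + q) ≤ b / (a + b) :=
  stmt10_general I h hconv F G a b hGF ha hb hGb hFa hpos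
end

section
/- Fix a real number β > -1 and positive integers a, b. Let (A_n, B_n)_{n≥0} be a process adapted to a filtration (𝓕_n) on a probability space with (A_0, B_0) = (a, b), such that for every n ≥ 0, almost surely (A_{n+1}, B_{n+1}) − (A_n, B_n) ∈ {(1,0), (0,1)} and P( (A_{n+1}, B_{n+1}) = (A_n+1, B_n) | 𝓕_n ) = (A_n+β)/(A_n+B_n+2β). Then almost surely the set { n ≥ 0 : A_n = B_n } is finite. -/
open MeasureTheory Filter Topology

open Finset

private lemma prod_shift (c : ℝ) (k : ℕ) :
    (∏ j ∈ range k, (c + 1 + j)) * c = (∏ j ∈ range k, (c + j)) * (c + k) := by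
  induction k with
  | zero => simp [mul_comm]
  | succ n ih =>
    rw [prod_range_succ, prod_range_succ]
    push_cast
    linear_combination (c + 1 + (n:ℝ)) * ih

private lemma prod_two_mul (f : ℕ → ℝ) (k : ℕ) :
    ∏ i ∈ range (2*k), f i = ∏ j ∈ range k, (f (2*j) * f (2*j+1)) := by
  induction k with
  | zero => simp
  | succ n ih =>
    have h : 2*(n+1) = (2*n)+1+1 := by ring
    rw [h, prod_range_succ, prod_range_succ, prod_range_succ, ih]
    ring

noncomputable def polyaH (β : ℝ) (k : ℕ) (x y : ℝ) : ℝ :=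
  (∏ j ∈ range k, (x + β + j)) * (∏ j ∈ range k, (y + β + j)) /
    ∏ i ∈ range (2*k), (x + y + 2*β + i)

section
variable {β : ℝ} (hβ : -1 < β) {k : ℕ} {x y : ℝ}

private lemma den_pos (hx : 0 < x + β) (hy : 0 < y + β) (m : ℕ) :
    0 < ∏ i ∈ range m, (x + y + 2*β + i) := by
  apply Finset.prod_pos
  intro i _
  have : (0:ℝ) ≤ i := Nat.cast_nonneg i
  linarith

private lemma num_pos (hx : 0 < x + β) (m : ℕ) :
    0 < ∏ j ∈ range m, (x + β + j) := by
  apply Finset.prod_pos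
  intro i _
  have : (0:ℝ) ≤ i := Nat.cast_nonneg i
  linarith

lemma polyaH_pos (hx : 0 < x + β) (hy : 0 < y + β) : 0 < polyaH β k x y := by
  exact div_pos (mul_pos (num_pos hx k) (num_pos hy k)) (den_pos hx hy _)

lemma polyaH_le_one (hx : 0 < x + β) (hy : 0 < y + β) : polyaH β k x y ≤ 1 := by
  rw [polyaH, div_le_one (den_pos hx hy _), ← Finset.prod_mul_distrib,
    prod_two_mul (fun i : ℕ => x + y + 2*β + i) k]
  apply Finset.prod_le_prod
  · intro i _
    have h1 : (0:ℝ) ≤ i := Nat.cast_nonneg i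
    have := mul_pos (by linarith : (0:ℝ) < x + β + i) (by linarith : (0:ℝ) < y + β + i)
    linarith
  · intro i _
    have h1 : (0:ℝ) ≤ i := Nat.cast_nonneg i
    push_cast
    nlinarith [hx, hy]
end

section
variable {β : ℝ} {k : ℕ} {x y : ℝ}

private lemma prod_shift' (c : ℝ) (m : ℕ) (f : ℕ → ℝ) (hf : ∀ j : ℕ, f j = c + 1 + j) :
    (∏ j ∈ range m, f j) * c = (∏ j ∈ range m, (c + j)) * (c + m) := by
  rw [show (∏ j ∈ range m, f j) = ∏ j ∈ range m, (c + 1 + j) from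
    Finset.prod_congr rfl fun j _ => hf j]
  exact prod_shift c m

lemma polyaH_step (hx : 0 < x + β) (hy : 0 < y + β) :
    (x + β) / (x + y + 2*β) * polyaH β k (x+1) y
      + (y + β) / (x + y + 2*β) * polyaH β k x (y+1) = polyaH β k x y := by
  have hS : 0 < x + y + 2*β := by linarith
  set P : ℝ := ∏ j ∈ range k, (x + β + j) with hP
  set Q : ℝ := ∏ j ∈ range k, (y + β + j) with hQ
  set R : ℝ := ∏ i ∈ range (2*k), (x + y + 2*β + i) with hR
  have hPpos := num_pos (β := β) hx k
  have hQpos := num_pos (β := β) hy k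
  have hRpos := den_pos hx hy (2*k)
  have e1 : (∏ j ∈ range k, (x + 1 + β + j)) * (x + β) = P * (x + β + k) := by
    have := prod_shift' (x + β) k (fun j : ℕ => x + 1 + β + j) (fun j => by push_cast; ring)
    rw [this, hP]
  have e2 : (∏ j ∈ range k, (y + 1 + β + j)) * (y + β) = Q * (y + β + k) := by
    have := prod_shift' (y + β) k (fun j : ℕ => y + 1 + β + j) (fun j => by push_cast; ring)
    rw [this, hQ]
  have e3 : (∏ i ∈ range (2*k), (x + 1 + y + 2*β + i)) * (x + y + 2*β)
      = R * (x + y + 2*β + 2*k) := by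
    have := prod_shift' (x + y + 2*β) (2*k) (fun i : ℕ => x + 1 + y + 2*β + i)
      (fun j => by push_cast; ring)
    rw [this, hR]; push_cast; ring
  have e4 : (∏ i ∈ range (2*k), (x + (y + 1) + 2*β + i)) * (x + y + 2*β)
      = R * (x + y + 2*β + 2*k) := by
    have := prod_shift' (x + y + 2*β) (2*k) (fun i : ℕ => x + (y + 1) + 2*β + i)
      (fun j => by push_cast; ring)
    rw [this, hR]; push_cast; ring
  have hR1pos : (0:ℝ) < ∏ i ∈ range (2*k), (x + 1 + y + 2*β + i) := by
    apply Finset.prod_pos; intro i _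
    have : (0:ℝ) ≤ i := Nat.cast_nonneg i; linarith
  have hR2pos : (0:ℝ) < ∏ i ∈ range (2*k), (x + (y + 1) + 2*β + i) := by
    apply Finset.prod_pos; intro i _
    have : (0:ℝ) ≤ i := Nat.cast_nonneg i; linarith
  have eR : (∏ i ∈ range (2*k), (x + (y + 1) + 2*β + i))
      = ∏ i ∈ range (2*k), (x + 1 + y + 2*β + i) :=
    Finset.prod_congr rfl fun i _ => by ring
  rw [polyaH, polyaH, polyaH, ← hP, ← hQ, ← hR]
  rw [eR, div_mul_div_comm, div_mul_div_comm, ← add_div,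
    div_eq_div_iff (mul_pos hS hR1pos).ne' hRpos.ne']
  linear_combination R * Q * e1 + R * P * e2 - P * Q * e3
end

section
variable {β : ℝ} {k : ℕ} {x y : ℝ}

lemma polyaH_succ (hx : 0 < x + β) (hy : 0 < y + β) :
    polyaH β (k+1) x y = polyaH β k x y *
      ((x + β + k) * (y + β + k) / ((x + y + 2*β + 2*k) * (x + y + 2*β + (2*k+1)))) := by
  have h2 : 2*(k+1) = (2*k)+1+1 := by ring
  rw [polyaH, polyaH, h2, prod_range_succ, prod_range_succ, prod_range_succ, prod_range_succ]
  have d1 : (0:ℝ) < x + y + 2*β + 2*k := by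
    have : (0:ℝ) ≤ (2*k:ℕ) := Nat.cast_nonneg _
    push_cast at this ⊢; linarith
  have d2 : (0:ℝ) < x + y + 2*β + (2*k+1) := by linarith
  have hR := den_pos hx hy (2*k)
  push_cast
  field_simp

lemma polyaH_zero : polyaH β 0 x y = 1 := by simp [polyaH]

/-- decay of the moment sequence -/
lemma polyaH_bound (hx : 0 < x + β) (hy : 0 < y + β) (k : ℕ) :
    (4^k * polyaH β k x y)^2 * (x + y + 2*β + 2*k) ≤ x + y + 2*β := by
  induction k with
  | zero => simp [polyaH_zero]
  | succ n ih =>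
    have hS : 0 < x + y + 2*β := by linarith
    have hn : (0:ℝ) ≤ (n:ℝ) := Nat.cast_nonneg _
    have d1 : (0:ℝ) < x + y + 2*β + 2*n := by linarith
    have d2 : (0:ℝ) < x + y + 2*β + (2*n+1) := by linarith
    have d3 : (0:ℝ) < x + y + 2*β + 2*((n:ℝ)+1) := by linarith
    have hxk : (0:ℝ) < x + β + n := by linarith
    have hyk : (0:ℝ) < y + β + n := by linarith
    have hw : 0 < polyaH β n x y := polyaH_pos hx hy
    have key : 4*((x+β+(n:ℝ))*(y+β+n)) ≤ ((x+y+2*β)+2*n)^2 := by nlinarith [sq_nonneg (x-y)]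
    have e1 : ((x+y+2*β)+2*n)*((x+y+2*β)+2*((n:ℝ)+1)) ≤ ((x+y+2*β)+2*n+1)^2 := by nlinarith
    rw [polyaH_succ hx hy]
    push_cast
    set w := polyaH β n x y with hwdef
    set S := x + y + 2*β with hSdef
    set p := x + β + (n:ℝ) with hpdef
    set q := y + β + (n:ℝ) with hqdef
    set u : ℝ := 4^n * w with hudef
    have hu : 0 < u := by positivity
    have hD : (0:ℝ) < (S + 2*n) * (S + (2*n+1)) := mul_pos d1 d2
    have hAD : (4^(n+1) * (w * (p*q / ((S + 2*n) * (S + (2*n+1))))))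
        * ((S + 2*n) * (S + (2*n+1))) = 4*u*(p*q) := by
      have hc : (p*q / ((S + 2*n) * (S + (2*n+1)))) * ((S + 2*n) * (S + (2*n+1))) = p*q :=
        div_mul_cancel₀ _ (ne_of_gt hD)
      calc (4^(n+1) * (w * (p*q / ((S + 2*n) * (S + (2*n+1))))))
            * ((S + 2*n) * (S + (2*n+1)))
          = 4^(n+1) * w * ((p*q / ((S + 2*n) * (S + (2*n+1)))) * ((S + 2*n) * (S + (2*n+1)))) := by
            ring
        _ = 4^(n+1) * w * (p*q) := by rw [hc]
        _ = 4*u*(p*q) := by rw [hudef]; ring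
    have expand : (4^(n+1) * (w * (p*q / ((S + 2*n) * (S + (2*n+1))))))^2 * (S + 2*((n:ℝ)+1))
        = (4*u*(p*q))^2 * (S + 2*((n:ℝ)+1)) / (((S + 2*n) * (S + (2*n+1)))^2) := by
      rw [eq_div_iff (by positivity), ← hAD]
      ring
    rw [expand, div_le_iff₀ (by positivity)]
    have s1 : (4*(p*q))^2 ≤ ((S+2*n)^2)^2 := by
      have h0 : (0:ℝ) ≤ 4*(p*q) := by positivity
      exact pow_le_pow_left₀ h0 (by linarith [key]) 2
    calc (4*u*(p*q))^2 * (S + 2*((n:ℝ)+1))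
        = (4*(p*q))^2 * (u^2 * (S + 2*((n:ℝ)+1))) := by ring
      _ ≤ ((S+2*n)^2)^2 * (u^2 * (S + 2*((n:ℝ)+1))) := by
          apply mul_le_mul_of_nonneg_right s1
          exact mul_nonneg (sq_nonneg u) d3.le
      _ = (u^2*(S+2*n)) * ((S+2*n)^3 * (S + 2*((n:ℝ)+1))) := by ring
      _ ≤ S * ((S+2*n)^3 * (S + 2*((n:ℝ)+1))) :=
          mul_le_mul_of_nonneg_right ih (by positivity)
      _ = (S*(S+2*n)^2) * ((S+2*n)*(S + 2*((n:ℝ)+1))) := by ring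
      _ ≤ (S*(S+2*n)^2) * ((S+2*n+1)^2) := by
          apply mul_le_mul_of_nonneg_left e1 (by positivity)
      _ = S * (((S + 2*n) * (S + (2*n+1)))^2) := by ring
end

lemma polyaH_diag_ge {β : ℝ} {k : ℕ} {x : ℝ} (hβ : -1 < β) (hx : (k:ℝ) + 1 ≤ x) :
    (1/2) * (1/4 : ℝ)^k ≤ polyaH β k x x := by
  have hk0 : (0:ℝ) ≤ k := Nat.cast_nonneg _
  have hs0 : (0:ℝ) < x + β := by linarith
  set s0 : ℝ := x + β with hs0def
  set ε : ℝ := 1 / (2*s0+1) with hεdef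
  have h2s : (0:ℝ) < 2*s0+1 := by linarith
  have hεpos : 0 < ε := by positivity
  have hε : ε * (2*s0+1) = 1 := by rw [hεdef]; field_simp
  have hεle : (k:ℝ) * ε ≤ 1/2 := by
    rw [hεdef, mul_one_div, div_le_div_iff₀ h2s two_pos]
    linarith
  -- rewrite polyaH as a product of factors
  have hden : (∏ i ∈ range (2*k), (x + x + 2*β + i))
      = ∏ j ∈ range k, ((2*(s0+j)) * (2*(s0+j)+1)) := by
    rw [prod_two_mul (fun i : ℕ => x + x + 2*β + i) k]
    apply Finset.prod_congr rfl
    intro j _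
    push_cast
    ring
  have hnum : (∏ j ∈ range k, (x + β + j)) * (∏ j ∈ range k, (x + β + j))
      = ∏ j ∈ range k, (s0+j)^2 := by
    rw [← Finset.prod_mul_distrib]
    apply Finset.prod_congr rfl
    intro j _
    rw [hs0def]; ring
  have hfac : polyaH β k x x = ∏ j ∈ range k, ((s0+j)^2 / ((2*(s0+j)) * (2*(s0+j)+1))) := by
    rw [polyaH, hnum, hden, ← Finset.prod_div_distrib]
  rw [hfac]
  have hc : ∀ j ∈ range k, (1/4) * (1-ε) ≤ (s0+j)^2 / ((2*(s0+j)) * (2*(s0+j)+1)) := by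
    intro j _
    have hj : (0:ℝ) ≤ j := Nat.cast_nonneg _
    have ht : s0 ≤ s0 + j := by linarith
    have htpos : 0 < s0 + j := by linarith
    rw [le_div_iff₀ (by nlinarith)]
    nlinarith [mul_le_mul_of_nonneg_left ht hεpos.le, hε]
  have hcnn : (0:ℝ) ≤ (1/4) * (1-ε) := by
    have : ε ≤ 1 := by
      rw [hεdef, div_le_one h2s]; linarith
    linarith
  calc (1/2) * (1/4 : ℝ)^k ≤ (1 - k*ε) * (1/4)^k := by
        have : (0:ℝ) ≤ (1/4:ℝ)^k := by positivity
        nlinarith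
    _ ≤ (1-ε)^k * (1/4)^k := by
        have hb := one_add_mul_le_pow (a := -ε) (by linarith) k
        have e : (1:ℝ) + -ε = 1 - ε := by ring
        rw [e] at hb
        have h' : 1 - (k:ℝ)*ε ≤ (1-ε)^k := by linarith [hb]
        exact mul_le_mul_of_nonneg_right h' (by positivity)
    _ = ∏ j ∈ range k, ((1/4) * (1-ε)) := by
        rw [Finset.prod_const, Finset.card_range, mul_pow]
        ring
    _ ≤ ∏ j ∈ range k, ((s0+j)^2 / ((2*(s0+j)) * (2*(s0+j)+1))) :=
        Finset.prod_le_prod (fun j _ => hcnn) hc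

/-- Key step of Lemma 3.3: for the generalized Pólya urn walk with
transition probabilities `(A_n+β)/(A_n+B_n+2β)` started from positive
integers `(a,b)`, almost surely the two coordinates coincide only finitely
often. -/
theorem stmt12 {Ω : Type*} {m0 : MeasurableSpace Ω} {μ : Measure Ω}
    [IsProbabilityMeasure μ] (𝓕 : Filtration ℕ m0)
    (β : ℝ) (hβ : -1 < β) (a b : ℕ) (ha : 1 ≤ a) (hb : 1 ≤ b)
    (A B : ℕ → Ω → ℕ)
    (hA : ∀ n, Measurable[𝓕 n] (A n)) (hB : ∀ n, Measurable[𝓕 n] (B n))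
    (hinit : ∀ ω, A 0 ω = a ∧ B 0 ω = b)
    (hstep : ∀ n : ℕ, ∀ᵐ ω ∂μ,
      (A (n + 1) ω = A n ω + 1 ∧ B (n + 1) ω = B n ω) ∨
      (A (n + 1) ω = A n ω ∧ B (n + 1) ω = B n ω + 1))
    (hdyn : ∀ n : ℕ,
      (μ[Set.indicator {ω | A (n + 1) ω = A n ω + 1 ∧ B (n + 1) ω = B n ω}
          (fun _ => (1 : ℝ)) | 𝓕 n])
        =ᵐ[μ] fun ω => ((A n ω : ℝ) + β) / ((A n ω : ℝ) + (B n ω : ℝ) + 2 * β)) :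
    ∀ᵐ ω ∂μ, {n : ℕ | A n ω = B n ω}.Finite := by
  have castMeas : Measurable (Nat.cast : ℕ → ℝ) := measurable_from_top
  have hβ1 : (0:ℝ) < 1 + β := by linarith
  -- structural facts
  have hstruct : ∀ᵐ ω ∂μ, ∀ n, a ≤ A n ω ∧ b ≤ B n ω ∧ A n ω + B n ω = n + (a + b) := by
    filter_upwards [ae_all_iff.2 hstep] with ω hω
    intro n
    induction n with
    | zero => rcases hinit ω with ⟨h1, h2⟩; omega
    | succ n ih => rcases hω n with ⟨h1, h2⟩ | ⟨h1, h2⟩ <;> omega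
  -- positivity of coordinates, a.e.
  have hposA : ∀ (x : ℕ), a ≤ x → (0:ℝ) < (x:ℝ) + β := by
    intro x hx
    have : (1:ℝ) ≤ (x:ℝ) := by exact_mod_cast le_trans ha hx
    linarith
  have hposB : ∀ (x : ℕ), b ≤ x → (0:ℝ) < (x:ℝ) + β := by
    intro x hx
    have : (1:ℝ) ≤ (x:ℝ) := by exact_mod_cast le_trans hb hx
    linarith
  -- main bound for each k
  have key : ∀ k : ℕ, μ {ω | ¬ ({n : ℕ | A n ω = B n ω}).Finite}
      ≤ ENNReal.ofReal (2 * 4^k * polyaH β k a b) := by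
    intro k
    set v : ℝ := polyaH β k a b with hvdef
    set Z : ℕ → Ω → ℝ := fun n ω => polyaH β k (A n ω) (B n ω) with hZdef
    -- measurability
    have mA : ∀ n, Measurable[𝓕 n] fun ω => ((A n ω : ℝ)) := fun n => castMeas.comp (hA n)
    have mB : ∀ n, Measurable[𝓕 n] fun ω => ((B n ω : ℝ)) := fun n => castMeas.comp (hB n)
    have mZ : ∀ n, Measurable[𝓕 n] (Z n) := by
      intro n
      apply Measurable.div
      · exact (Finset.measurable_prod _ fun j _ => ((mA n).add_const β).add_const _).mul
          (Finset.measurable_prod _ fun j _ => ((mB n).add_const β).add_const _)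
      · exact Finset.measurable_prod _ fun i _ =>
          ((((mA n).add (mB n)).add_const (2*β)).add_const _)
    have mZ0 : ∀ n, Measurable (Z n) := fun n => (mZ n).mono (𝓕.le n) le_rfl
    -- bounds and integrability
    have hZbdd : ∀ n, ∀ᵐ ω ∂μ, 0 < Z n ω ∧ Z n ω ≤ 1 := by
      intro n
      filter_upwards [hstruct] with ω hω
      obtain ⟨h1, h2, -⟩ := hω n
      exact ⟨polyaH_pos (hposA _ h1) (hposB _ h2), polyaH_le_one (hposA _ h1) (hposB _ h2)⟩
    have intZ : ∀ n, Integrable (Z n) μ := by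
      intro n
      refine (integrable_const (1:ℝ)).mono' (mZ0 n).aestronglyMeasurable ?_
      filter_upwards [hZbdd n] with ω hω
      rw [Real.norm_eq_abs, abs_le]
      constructor <;> [linarith [hω.1]; exact hω.2]
    -- martingale property
    have hmartstep : ∀ n, Z n =ᵐ[μ] μ[Z (n+1) | 𝓕 n] := by
      intro n
      set U : Set Ω := {ω | A (n + 1) ω = A n ω + 1 ∧ B (n + 1) ω = B n ω} with hUdef
      have hdyn' := hdyn n
      rw [← hUdef] at hdyn'
      have hAm0 : ∀ m, Measurable (A m) := fun m => (hA m).mono (𝓕.le m) le_rfl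
      have hBm0 : ∀ m, Measurable (B m) := fun m => (hB m).mono (𝓕.le m) le_rfl
      have hUm : MeasurableSet U := by
        rw [hUdef]
        have h1 : MeasurableSet {ω | A (n + 1) ω = A n ω + 1} :=
          measurableSet_eq_fun (hAm0 (n+1)) ((hAm0 n).add_const 1)
        have h2 : MeasurableSet {ω | B (n + 1) ω = B n ω} :=
          measurableSet_eq_fun (hBm0 (n+1)) (hBm0 n)
        exact (h1.inter h2 : _)
      set ind : Ω → ℝ := U.indicator (fun _ => (1:ℝ)) with hinddef
      set g1 : Ω → ℝ := fun ω => polyaH β k ((A n ω : ℝ) + 1) (B n ω) with hg1def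
      set g2 : Ω → ℝ := fun ω => polyaH β k (A n ω) ((B n ω : ℝ) + 1) with hg2def
      -- measurability w.r.t. 𝓕 n
      have mg1 : Measurable[𝓕 n] g1 := by
        apply Measurable.div
        · exact (Finset.measurable_prod _ fun j _ =>
              ((((mA n).add_const 1).add_const β).add_const _)).mul
            (Finset.measurable_prod _ fun j _ => ((mB n).add_const β).add_const _)
        · exact Finset.measurable_prod _ fun i _ =>
            (((((mA n).add_const 1).add (mB n)).add_const (2*β)).add_const _)
      have mg2 : Measurable[𝓕 n] g2 := by
        apply Measurable.div
        · exact (Finset.measurable_prod _ fun j _ => (((mA n).add_const β).add_const _)).mul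
            (Finset.measurable_prod _ fun j _ => (((mB n).add_const 1).add_const β).add_const _)
        · exact Finset.measurable_prod _ fun i _ =>
            ((((mA n).add ((mB n).add_const 1)).add_const (2*β)).add_const _)
      have mg10 : Measurable g1 := mg1.mono (𝓕.le n) le_rfl
      have mg20 : Measurable g2 := mg2.mono (𝓕.le n) le_rfl
      -- bounds
      have hg1bdd : ∀ᵐ ω ∂μ, 0 < g1 ω ∧ g1 ω ≤ 1 := by
        filter_upwards [hstruct] with ω hω
        obtain ⟨h1, h2, -⟩ := hω n
        have hx : (0:ℝ) < ((A n ω : ℝ) + 1) + β := by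
          have := hposA _ h1; linarith
        exact ⟨polyaH_pos hx (hposB _ h2), polyaH_le_one hx (hposB _ h2)⟩
      have hg2bdd : ∀ᵐ ω ∂μ, 0 < g2 ω ∧ g2 ω ≤ 1 := by
        filter_upwards [hstruct] with ω hω
        obtain ⟨h1, h2, -⟩ := hω n
        have hy : (0:ℝ) < ((B n ω : ℝ) + 1) + β := by
          have := hposB _ h2; linarith
        exact ⟨polyaH_pos (hposA _ h1) hy, polyaH_le_one (hposA _ h1) hy⟩
      -- integrability
      have intg1 : Integrable g1 μ := by
        refine (integrable_const (1:ℝ)).mono' mg10.aestronglyMeasurable ?_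
        filter_upwards [hg1bdd] with ω h
        rw [Real.norm_eq_abs, abs_le]; constructor <;> [linarith [h.1]; exact h.2]
      have intg2 : Integrable g2 μ := by
        refine (integrable_const (1:ℝ)).mono' mg20.aestronglyMeasurable ?_
        filter_upwards [hg2bdd] with ω h
        rw [Real.norm_eq_abs, abs_le]; constructor <;> [linarith [h.1]; exact h.2]
      have intind : Integrable ind μ := (integrable_const (1:ℝ)).indicator hUm
      have intprod : Integrable ((g1 - g2) * ind) μ := by
        refine (integrable_const (1:ℝ)).mono'
          (((mg10.sub mg20).mul
            ((measurable_const.indicator hUm))).aestronglyMeasurable) ?_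
        filter_upwards [hg1bdd, hg2bdd] with ω h1 h2
        rw [Pi.mul_apply, Pi.sub_apply, Real.norm_eq_abs, abs_mul]
        have hind01 : |ind ω| ≤ 1 := by
          rw [hinddef]
          by_cases h : ω ∈ U <;>
            simp [Set.indicator_of_mem, Set.indicator_of_notMem, h]
        have habs : |g1 ω - g2 ω| ≤ 1 := by
          rw [abs_le]; constructor <;> [linarith [h1.2, h2.1]; linarith [h1.1, h2.2]]
        calc |g1 ω - g2 ω| * |ind ω| ≤ 1 * 1 :=
              mul_le_mul habs hind01 (abs_nonneg _) zero_le_one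
          _ = 1 := by norm_num
      -- decomposition of Z (n+1)
      have hsplit : Z (n+1) =ᵐ[μ] (g1 - g2) * ind + g2 := by
        filter_upwards [hstep n] with ω hω
        show Z (n+1) ω = (g1 ω - g2 ω) * ind ω + g2 ω
        rcases hω with ⟨h1, h2⟩ | ⟨h1, h2⟩
        · have hU : ω ∈ U := ⟨h1, h2⟩
          rw [hinddef, Set.indicator_of_mem hU]
          have : Z (n+1) ω = g1 ω := by
            rw [hZdef, hg1def]
            simp only [h1, h2]
            push_cast
            ring_nf
          rw [this]; ring
        · have hU : ω ∉ U := by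
            rw [hUdef]
            rintro ⟨hh1, hh2⟩
            omega
          rw [hinddef, Set.indicator_of_notMem hU]
          have : Z (n+1) ω = g2 ω := by
            rw [hZdef, hg2def]
            simp only [h1, h2]
            push_cast
            ring_nf
          rw [this]; ring
      -- conditional expectation computation
      have hce : μ[Z (n+1) | 𝓕 n] =ᵐ[μ] (g1 - g2) * (μ[ind | 𝓕 n]) + g2 := by
        calc μ[Z (n+1) | 𝓕 n] =ᵐ[μ] μ[(g1 - g2) * ind + g2 | 𝓕 n] := condExp_congr_ae hsplit
          _ =ᵐ[μ] μ[(g1 - g2) * ind | 𝓕 n] + μ[g2 | 𝓕 n] := condExp_add intprod intg2 _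
          _ =ᵐ[μ] (g1 - g2) * (μ[ind | 𝓕 n]) + μ[g2 | 𝓕 n] :=
              (condExp_mul_of_stronglyMeasurable_left ((mg1.sub mg2).stronglyMeasurable)
                intprod intind).add (EventuallyEq.rfl)
          _ =ᵐ[μ] (g1 - g2) * (μ[ind | 𝓕 n]) + g2 := by
              rw [condExp_of_stronglyMeasurable (𝓕.le n) mg2.stronglyMeasurable intg2]
      refine EventuallyEq.symm ?_
      calc μ[Z (n+1) | 𝓕 n] =ᵐ[μ] (g1 - g2) * (μ[ind | 𝓕 n]) + g2 := hce
        _ =ᵐ[μ] (g1 - g2) * (fun ω => ((A n ω : ℝ) + β)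
            / ((A n ω : ℝ) + (B n ω : ℝ) + 2 * β)) + g2 :=
              (EventuallyEq.rfl.mul hdyn').add EventuallyEq.rfl
        _ =ᵐ[μ] Z n := by
            filter_upwards [hstruct] with ω hω
            obtain ⟨h1, h2, -⟩ := hω n
            have hx := hposA _ h1
            have hy := hposB _ h2
            have hS : (0:ℝ) < (A n ω : ℝ) + (B n ω : ℝ) + 2*β := by linarith
            have hkey := polyaH_step (β := β) (k := k) hx hy
            have h1S : ((A n ω : ℝ) + β) / ((A n ω : ℝ) + (B n ω : ℝ) + 2*β)
                + ((B n ω : ℝ) + β) / ((A n ω : ℝ) + (B n ω : ℝ) + 2*β) = 1 := by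
              rw [← add_div, div_eq_one_iff_eq (ne_of_gt hS)]
              ring
            show (g1 ω - g2 ω) * (((A n ω : ℝ) + β)
                / ((A n ω : ℝ) + (B n ω : ℝ) + 2 * β)) + g2 ω = Z n ω
            rw [hg1def, hg2def, hZdef]
            linear_combination hkey - polyaH β k (A n ω) ((B n ω : ℝ) + 1) * h1S
    have mart : Martingale Z 𝓕 μ :=
      martingale_nat (fun n => (mZ n).stronglyMeasurable) intZ hmartstep
    -- integral value
    have hintval : ∀ n, ∫ ω, Z n ω ∂μ = v := by
      intro n
      have h0 : μ[Z n | 𝓕 0] =ᵐ[μ] Z 0 := mart.condExp_ae_eq (Nat.zero_le n)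
      have : ∫ ω, Z n ω ∂μ = ∫ ω, Z 0 ω ∂μ := by
        rw [← integral_condExp (𝓕.le 0) (f := Z n)]
        exact integral_congr_ae h0
      rw [this]
      have : Z 0 = fun _ => v := by
        funext ω
        rw [hZdef]
        simp only [(hinit ω).1, (hinit ω).2, hvdef]
      rw [this, integral_const]
      simp
    -- lintegral value
    have hlint : ∀ n, ∫⁻ ω, ENNReal.ofReal (Z n ω) ∂μ = ENNReal.ofReal v := by
      intro n
      rw [← ofReal_integral_eq_lintegral_ofReal (intZ n)
        ((hZbdd n).mono fun ω h => h.1.le), hintval n]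
    -- a.s. convergence
    have hbdd1 : ∀ n, eLpNorm (Z n) 1 μ ≤ (1 : NNReal) := by
      intro n
      refine le_trans (eLpNorm_le_of_ae_bound (C := 1)
        (((hZbdd n).mono fun ω h => by
          rw [Real.norm_eq_abs, abs_le]; constructor <;> [linarith [h.1]; exact h.2]))) ?_
      simp
    have hconv := mart.submartingale.exists_ae_tendsto_of_bdd hbdd1
    -- the liminf function
    set g : Ω → ENNReal := fun ω => liminf (fun n => ENNReal.ofReal (Z n ω)) atTop with hgdef
    have mg : Measurable g := Measurable.liminf fun n => ENNReal.measurable_ofReal.comp (mZ0 n)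
    set γ : ℝ := (1/2) * (1/4:ℝ)^k with hγdef
    have hγpos : 0 < γ := by positivity
    -- a.e. inclusion
    have hsub : ∀ᵐ ω ∂μ, ¬ ({n : ℕ | A n ω = B n ω}).Finite → ENNReal.ofReal γ ≤ g ω := by
      filter_upwards [hstruct, hconv] with ω hω hc hinf
      obtain ⟨c, hc⟩ := hc
      have hgω : g ω = ENNReal.ofReal c := by
        rw [hgdef]
        exact Tendsto.liminf_eq ((ENNReal.continuous_ofReal.tendsto c).comp hc)
      rw [hgω]
      apply ENNReal.ofReal_le_ofReal
      -- show γ ≤ c using infinitely many large tie times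
      by_contra hlt
      push_neg at hlt
      have hev := (tendsto_order.1 hc).2 γ hlt
      rw [eventually_atTop] at hev
      obtain ⟨N, hN⟩ := hev
      rw [← Set.not_infinite, not_not] at hinf
      obtain ⟨n, hn_mem, hn_gt⟩ := hinf.exists_gt (max N (2*k+2))
      have hnN : N ≤ n := le_trans (le_max_left _ _) hn_gt.le
      have hnk : 2*k+2 < n := lt_of_le_of_lt (le_max_right _ _) hn_gt
      have htie : A n ω = B n ω := hn_mem
      obtain ⟨h1, h2, h3⟩ := hω n
      have hxk : k + 2 ≤ A n ω := by omega
      have hZn : Z n ω = polyaH β k (A n ω) (A n ω) := by rw [hZdef]; simp [htie]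
      have hge : γ ≤ Z n ω := by
        rw [hZn, hγdef]
        apply polyaH_diag_ge hβ
        have : ((k:ℝ) + 2) ≤ (A n ω : ℝ) := by exact_mod_cast hxk
        linarith
      exact absurd (hN n hnN) (not_lt.2 hge)
    -- Markov + Fatou
    have hsubset : μ {ω | ¬ ({n : ℕ | A n ω = B n ω}).Finite}
        ≤ μ {ω | ENNReal.ofReal γ ≤ g ω} := by
      apply measure_mono_ae
      filter_upwards [hsub] with ω hω h
      exact hω h
    have hmarkov : μ {ω | ENNReal.ofReal γ ≤ g ω}
        ≤ (∫⁻ ω, g ω ∂μ) / ENNReal.ofReal γ :=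
      meas_ge_le_lintegral_div mg.aemeasurable
        (by simp [ENNReal.ofReal_pos.2 hγpos, ne_of_gt]) ENNReal.ofReal_ne_top
    have hfatou : (∫⁻ ω, g ω ∂μ) ≤ ENNReal.ofReal v := by
      refine le_trans (lintegral_liminf_le fun n => ENNReal.measurable_ofReal.comp (mZ0 n)) ?_
      simp only [hlint]
      exact liminf_const _ |>.le
    have hvpos : 0 < v := polyaH_pos (hposA a le_rfl) (hposB b le_rfl)
    calc μ {ω | ¬ ({n : ℕ | A n ω = B n ω}).Finite}
        ≤ (∫⁻ ω, g ω ∂μ) / ENNReal.ofReal γ := le_trans hsubset hmarkov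
      _ ≤ ENNReal.ofReal v / ENNReal.ofReal γ := by
          exact ENNReal.div_le_div_right hfatou _
      _ = ENNReal.ofReal (v / γ) := (ENNReal.ofReal_div_of_pos hγpos).symm
      _ ≤ ENNReal.ofReal (2 * 4^k * polyaH β k a b) := by
          apply ENNReal.ofReal_le_ofReal
          have h : (4:ℝ)^k * (1/4:ℝ)^k = 1 := by rw [← mul_pow]; norm_num
          have hγval : γ * (2*(4:ℝ)^k) = 1 := by rw [hγdef]; linear_combination h
          rw [hvdef, div_le_iff₀ hγpos]
          refine le_of_eq ?_
          linear_combination (-(polyaH β k (a:ℝ) (b:ℝ))) * hγval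
  -- conclusion
  rw [ae_iff]
  set T := {ω | ¬ ({n : ℕ | A n ω = B n ω}).Finite}
  have hs : (0:ℝ) < (a:ℝ) + b + 2*β := by
    have h1 : (1:ℝ) ≤ (a:ℝ) := by exact_mod_cast ha
    have h2 : (1:ℝ) ≤ (b:ℝ) := by exact_mod_cast hb
    linarith
  have hsmall : ∀ ε : ℝ, 0 < ε → μ T ≤ ENNReal.ofReal ε := by
    intro ε hε
    obtain ⟨k, hk⟩ := exists_nat_gt (2*((a:ℝ) + b + 2*β)/ε^2)
    refine le_trans (key k) ?_
    apply ENNReal.ofReal_le_ofReal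
    have hv : 0 < polyaH β k a b := polyaH_pos (hposA a le_rfl) (hposB b le_rfl)
    have hbd := polyaH_bound (β := β) (hposA a le_rfl) (hposB b le_rfl) k
    -- (4^k * v)^2 * (s + 2k) ≤ s
    have hks : (0:ℝ) < (a:ℝ) + b + 2*β + 2*k := by positivity
    have h2 : (2 * 4^k * polyaH β k a b)^2 ≤ 4*((a:ℝ) + b + 2*β)/((a:ℝ) + b + 2*β + 2*k) := by
      rw [le_div_iff₀ hks]
      nlinarith [hbd]
    have h3 : 4*((a:ℝ) + b + 2*β)/((a:ℝ) + b + 2*β + 2*k) < ε^2 := by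
      rw [div_lt_iff₀ hks]
      have : 2*((a:ℝ) + b + 2*β) < ε^2 * k := by
        rw [div_lt_iff₀ (by positivity : (0:ℝ) < ε^2)] at hk
        linarith [hk]
      nlinarith [hs, sq_nonneg ε]
    nlinarith [mul_pos (mul_pos (by norm_num : (0:ℝ) < 2) (by positivity : (0:ℝ) < (4:ℝ)^k)) hv, hε]
  by_contra hT
  have hTtop : μ T ≠ ⊤ := measure_ne_top μ T
  have hTpos : 0 < (μ T).toReal := ENNReal.toReal_pos hT hTtop
  have := hsmall ((μ T).toReal / 2) (by linarith)
  rw [show ENNReal.ofReal ((μ T).toReal / 2) = ENNReal.ofReal ((μ T).toReal) / 2 by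
    rw [ENNReal.ofReal_div_of_pos (by norm_num)]; norm_num, ENNReal.ofReal_toReal hTtop] at this
  have hhalf : μ T / 2 < μ T := ENNReal.half_lt_self hT hTtop
  exact absurd (lt_of_le_of_lt this hhalf) (lt_irrefl _)
end
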